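/- arXiv:1610.07054 — 3 statements merged into one kernel-verified Lean document; each statement's English description precedes it below -/
import Mathlib

section
/- Let γ > 0, T > 0 with Tγ ≠ 1, κ̂(a) = e^{-γa}, φ(a) = e^{-a/T}/T, and β > 0. Then β·∫₀^∞ β·κ̂(a)·[a + T·(Tγ/(1-Tγ))·((1-e^{-a/T}) - (1-κ̂(a))/(Tγ)²)] da = R₀²/(2(1+Tγ)), where R₀ = β/γ. -/
open MeasureTheory

lemma aux_int_exp {r : ℝ} (hr : 0 < r) :
    IntegrableOn (fun x : ℝ => Real.exp (-(r * x))) (Set.Ioi 0) := by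
  simpa [neg_mul] using exp_neg_integrableOn_Ioi (0:ℝ) hr

lemma aux_int_xexp {r : ℝ} (hr : 0 < r) :
    IntegrableOn (fun x : ℝ => x * Real.exp (-(r * x))) (Set.Ioi 0) := by
  have h := integrableOn_rpow_mul_exp_neg_mul_rpow (p := 1) (s := 1) (b := r)
    (by norm_num) one_pos hr
  refine h.congr_fun (fun x hx => ?_) measurableSet_Ioi
  simp [Real.rpow_one, neg_mul]

lemma aux_val_exp {r : ℝ} (hr : 0 < r) :
    ∫ x in Set.Ioi (0:ℝ), Real.exp (-(r * x)) = 1 / r := by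
  have h := Real.integral_rpow_mul_exp_neg_mul_Ioi (a := 1) (r := r) one_pos hr
  simpa [Real.Gamma_one] using h

lemma aux_val_xexp {r : ℝ} (hr : 0 < r) :
    ∫ x in Set.Ioi (0:ℝ), x * Real.exp (-(r * x)) = 1 / r ^ 2 := by
  have h := Real.integral_rpow_mul_exp_neg_mul_Ioi (a := 2) (r := r) two_pos hr
  rw [show (2:ℝ) - 1 = 1 by norm_num] at h
  simp only [Real.rpow_one] at h
  rw [h, Real.Gamma_two, Real.rpow_two, mul_one, div_pow, one_pow]

/-- First-order backward-tracing contribution for exponentially distributed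
delay with mean T: β·∫₀^∞ β·e^{-γa}·[a + T·(Tγ/(1-Tγ))·((1-e^{-a/T})
- (1-e^{-γa})/(Tγ)²)] da = R₀²/(2(1+Tγ)), R₀ = β/γ. -/
theorem stmt9 (γ T β : ℝ) (hγ : 0 < γ) (hT : 0 < T) (hTγ : T * γ ≠ 1)
    (hβ : 0 < β) (R₀ : ℝ) (hR : R₀ = β / γ) :
    β * ∫ a in Set.Ioi (0:ℝ),
        β * Real.exp (-γ * a) *
          (a + T * (T * γ / (1 - T * γ)) *
            ((1 - Real.exp (-a / T)) - (1 - Real.exp (-γ * a)) / (T * γ) ^ 2))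
      = R₀ ^ 2 / (2 * (1 + T * γ)) := by
  have hγ0 : γ ≠ 0 := hγ.ne'
  have hT0 : T ≠ 0 := hT.ne'
  have h1 : (1:ℝ) - T * γ ≠ 0 := by
    intro h; apply hTγ; linarith
  have hδ : 0 < γ + 1 / T := by positivity
  set K : ℝ := T * (T * γ / (1 - T * γ)) with hK
  set A : ℝ := β * 1 with hA
  set B : ℝ := β * (K * (1 - 1 / (T * γ) ^ 2)) with hB
  set C : ℝ := β * (-K) with hC
  set D : ℝ := β * (K / (T * γ) ^ 2) with hD
  have hcongr : ∀ a ∈ Set.Ioi (0:ℝ),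
      β * Real.exp (-γ * a) *
          (a + K * ((1 - Real.exp (-a / T)) - (1 - Real.exp (-γ * a)) / (T * γ) ^ 2))
        = A * (a * Real.exp (-(γ * a))) + B * Real.exp (-(γ * a))
            + C * Real.exp (-((γ + 1 / T) * a)) + D * Real.exp (-((2 * γ) * a)) := by
    intro a _
    have e1 : Real.exp (-((γ + 1 / T) * a)) = Real.exp (-(γ * a)) * Real.exp (-a / T) := by
      rw [← Real.exp_add]; ring_nf
    have e2 : Real.exp (-((2 * γ) * a)) = Real.exp (-(γ * a)) * Real.exp (-(γ * a)) := by
      rw [← Real.exp_add]; ring_nf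
    have e3 : Real.exp (-γ * a) = Real.exp (-(γ * a)) := by ring_nf
    rw [e1, e2, e3, hA, hB, hC, hD]
    have hTγ2 : ((T * γ) ^ 2 : ℝ) ≠ 0 := by positivity
    field_simp
    ring
  rw [setIntegral_congr_fun measurableSet_Ioi hcongr]
  have i1 := aux_int_xexp hγ
  have i2 := aux_int_exp hγ
  have i3 := aux_int_exp hδ
  have i4 := aux_int_exp (show (0:ℝ) < 2 * γ by positivity)
  have j1 : Integrable (fun x : ℝ => A * (x * Real.exp (-(γ * x))))
      (volume.restrict (Set.Ioi 0)) := i1.const_mul A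
  have j2 : Integrable (fun x : ℝ => B * Real.exp (-(γ * x)))
      (volume.restrict (Set.Ioi 0)) := i2.const_mul B
  have j3 : Integrable (fun x : ℝ => C * Real.exp (-((γ + 1 / T) * x)))
      (volume.restrict (Set.Ioi 0)) := i3.const_mul C
  have j4 : Integrable (fun x : ℝ => D * Real.exp (-((2 * γ) * x)))
      (volume.restrict (Set.Ioi 0)) := i4.const_mul D
  have j12 : Integrable (fun x : ℝ => A * (x * Real.exp (-(γ * x)))
      + B * Real.exp (-(γ * x))) (volume.restrict (Set.Ioi 0)) := j1.add j2
  have j123 : Integrable (fun x : ℝ => A * (x * Real.exp (-(γ * x)))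
      + B * Real.exp (-(γ * x)) + C * Real.exp (-((γ + 1 / T) * x)))
      (volume.restrict (Set.Ioi 0)) := j12.add j3
  rw [integral_add j123 j4, integral_add j12 j3, integral_add j1 j2,
    integral_const_mul, integral_const_mul, integral_const_mul, integral_const_mul,
    aux_val_xexp hγ, aux_val_exp hγ, aux_val_exp hδ,
    aux_val_exp (show (0:ℝ) < 2 * γ by positivity)]
  rw [hA, hB, hC, hD, hK, hR]
  have h2 : (1:ℝ) + T * γ ≠ 0 := by positivity
  have h3 : γ + 1 / T ≠ 0 := hδ.ne'
  have h1' : (1:ℝ) - γ * T ≠ 0 := by rwa [mul_comm] at h1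
  field_simp
  ring
end

section
/- Let γ > 0, σ > 0, α ≥ 0 with γ = α+σ, κ̂(a) = e^{-γa}, and let φ : [0,∞) → [0,∞) be an integrable probability density. Then for all a ≥ 0, ∫₀^∞ ∫₀^a σ·e^{-γ(b+c)}·(∫_c^a φ(a'-c)da')·dc·db = (σ/γ²)·((1-κ̂) ∗ φ)(a), where (f∗g)(a) = ∫₀^a f(a-τ)g(τ)dτ. -/
open MeasureTheory

/-- Convolution on [0,a]: (f ∗ g)(a) = ∫₀^a f(a-τ)g(τ)dτ. -/
noncomputable def conv (f g : ℝ → ℝ) (a : ℝ) : ℝ := ∫ τ in (0:ℝ)..a, f (a - τ) * g τ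

lemma exp_int (γ : ℝ) (hγ : 0 < γ) (t : ℝ) :
    ∫ c in (0:ℝ)..t, Real.exp (-γ * c) = (1 - Real.exp (-γ * t)) / γ := by
  have h : (-γ : ℝ) ≠ 0 := neg_ne_zero.mpr hγ.ne'
  have := intervalIntegral.integral_comp_mul_left (f := fun x => Real.exp x)
    (a := (0:ℝ)) (b := t) (c := -γ) h
  simp only [integral_exp, mul_zero] at this
  rw [this]
  field_simp
  linear_combination (Real.exp 0 - Real.exp (-(γ * t))) * mul_inv_cancel₀ hγ.ne' + Real.exp_zero

lemma key_fubini (γ : ℝ) (hγ : 0 < γ) (φ : ℝ → ℝ)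
    (hφint : IntegrableOn φ (Set.Ici 0)) (a : ℝ) (ha : 0 ≤ a) :
    (∫ c in (0:ℝ)..a, Real.exp (-γ * c) * ∫ τ in (0:ℝ)..(a - c), φ τ)
      = ∫ τ in (0:ℝ)..a, ((1 - Real.exp (-γ * (a - τ))) / γ) * φ τ := by
  set μ : Measure ℝ := volume.restrict (Set.Ioc 0 a) with hμ
  have hsub : Set.Ioc (0:ℝ) a ⊆ Set.Ici 0 := fun x hx => le_of_lt hx.1
  have hφμ : Integrable φ μ := hφint.mono_set hsub
  have hexpμ : Integrable (fun c => Real.exp (-γ * c)) μ :=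
    (Real.continuous_exp.comp (continuous_const.mul continuous_id)).integrableOn_Ioc
  set f : ℝ → ℝ → ℝ := fun c τ => if c + τ ≤ a then Real.exp (-γ * c) * φ τ else 0 with hf
  have hs : MeasurableSet {p : ℝ × ℝ | p.1 + p.2 ≤ a} :=
    measurableSet_le (measurable_fst.add measurable_snd) measurable_const
  have huncurry : Function.uncurry f =
      Set.indicator {p : ℝ × ℝ | p.1 + p.2 ≤ a}
        (fun p => Real.exp (-γ * p.1) * φ p.2) := by
    funext p
    simp [hf, Function.uncurry, Set.indicator_apply, Set.mem_setOf_eq]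
  have hint : Integrable (Function.uncurry f) (μ.prod μ) := by
    rw [huncurry]
    exact (hexpμ.mul_prod hφμ).indicator hs
  have hswap := MeasureTheory.integral_integral_swap hint
  -- left side equals first iterated integral
  have hL : (∫ c in (0:ℝ)..a, Real.exp (-γ * c) * ∫ τ in (0:ℝ)..(a - c), φ τ)
      = ∫ c, (∫ τ, f c τ ∂μ) ∂μ := by
    rw [intervalIntegral.integral_of_le ha, hμ]
    apply setIntegral_congr_fun measurableSet_Ioc
    intro c hc
    have hca : 0 ≤ a - c := by linarith [hc.2]
    show Real.exp (-γ * c) * (∫ τ in (0:ℝ)..(a - c), φ τ) = ∫ τ, f c τ ∂μ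
    have h1 : (∫ τ, f c τ ∂μ)
        = ∫ τ in Set.Ioc (0:ℝ) a, Real.exp (-γ * c) *
            (Set.Ioc 0 (a - c)).indicator φ τ := by
      apply setIntegral_congr_fun measurableSet_Ioc
      intro τ hτ
      simp only [hf, Set.indicator_apply, Set.mem_Ioc]
      by_cases h : c + τ ≤ a
      · rw [if_pos h, if_pos ⟨hτ.1, by linarith⟩]
      · rw [if_neg h, if_neg (by intro hh; exact h (by linarith [hh.2])), mul_zero]
    rw [h1, MeasureTheory.integral_const_mul, setIntegral_indicator measurableSet_Ioc]
    have : Set.Ioc (0:ℝ) a ∩ Set.Ioc 0 (a - c) = Set.Ioc 0 (a - c) := by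
      apply Set.inter_eq_self_of_subset_right
      exact Set.Ioc_subset_Ioc le_rfl (by linarith [hc.1])
    rw [this, intervalIntegral.integral_of_le hca]
  -- right side equals second iterated integral
  have hR : (∫ τ, (∫ c, f c τ ∂μ) ∂μ)
      = ∫ τ in (0:ℝ)..a, ((1 - Real.exp (-γ * (a - τ))) / γ) * φ τ := by
    rw [intervalIntegral.integral_of_le ha, hμ]
    apply setIntegral_congr_fun measurableSet_Ioc
    intro τ hτ
    have hτa : 0 ≤ a - τ := by linarith [hτ.2]
    show (∫ c, f c τ ∂μ) = ((1 - Real.exp (-γ * (a - τ))) / γ) * φ τ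
    have h1 : (∫ c, f c τ ∂μ)
        = ∫ c in Set.Ioc (0:ℝ) a,
            (Set.Ioc 0 (a - τ)).indicator (fun c => Real.exp (-γ * c)) c * φ τ := by
      apply setIntegral_congr_fun measurableSet_Ioc
      intro c hc
      simp only [hf, Set.indicator_apply, Set.mem_Ioc]
      by_cases h : c + τ ≤ a
      · rw [if_pos h, if_pos ⟨hc.1, by linarith⟩]
      · rw [if_neg h, if_neg (by intro hh; exact h (by linarith [hh.2])), zero_mul]
    rw [h1, integral_mul_const, setIntegral_indicator measurableSet_Ioc]
    have : Set.Ioc (0:ℝ) a ∩ Set.Ioc 0 (a - τ) = Set.Ioc 0 (a - τ) := by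
      apply Set.inter_eq_self_of_subset_right
      exact Set.Ioc_subset_Ioc le_rfl (by linarith [hτ.1])
    rw [this, ← intervalIntegral.integral_of_le hτa, exp_int γ hγ]
  rw [hL, hswap, hR]

/-- Key forward-tracing identity: for γ = α+σ > 0, σ > 0, α ≥ 0, φ an
integrable probability density on [0,∞):
∫₀^∞ ∫₀^a σ·e^{-γ(b+c)}·(∫_c^a φ(a'-c)da') dc db = (σ/γ²)·((1-κ̂)∗φ)(a). -/
theorem stmt12 (γ σ α : ℝ) (hγ : 0 < γ) (hσ : 0 < σ) (hα : 0 ≤ α)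
    (hsum : γ = α + σ)
    (φ : ℝ → ℝ) (hφ0 : ∀ x, 0 ≤ x → 0 ≤ φ x)
    (hφint : IntegrableOn φ (Set.Ici 0))
    (hφ1 : ∫ x in Set.Ici (0:ℝ), φ x = 1)
    (a : ℝ) (ha : 0 ≤ a) :
    (∫ b in Set.Ioi (0:ℝ), ∫ c in (0:ℝ)..a,
        σ * Real.exp (-γ * (b + c)) * ∫ a' in c..a, φ (a' - c))
      = (σ / γ ^ 2) * conv (fun s => 1 - Real.exp (-γ * s)) φ a := by
  set I : ℝ := ∫ c in (0:ℝ)..a, Real.exp (-γ * c) * ∫ τ in (0:ℝ)..(a - c), φ τ with hI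
  -- Step 1: pull out the b-dependence
  have hstep1 : ∀ b : ℝ, (∫ c in (0:ℝ)..a,
      σ * Real.exp (-γ * (b + c)) * ∫ a' in c..a, φ (a' - c))
      = Real.exp (-γ * b) * (σ * I) := by
    intro b
    have : ∀ c : ℝ, (σ * Real.exp (-γ * (b + c)) * ∫ a' in c..a, φ (a' - c))
        = (Real.exp (-γ * b) * σ) *
          (Real.exp (-γ * c) * ∫ τ in (0:ℝ)..(a - c), φ τ) := by
      intro c
      have hshift : (∫ a' in c..a, φ (a' - c)) = ∫ τ in (0:ℝ)..(a - c), φ τ := by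
        have := intervalIntegral.integral_comp_sub_right (a := c) (b := a) φ c
        simpa using this
      rw [hshift]
      have : Real.exp (-γ * (b + c)) = Real.exp (-γ * b) * Real.exp (-γ * c) := by
        rw [← Real.exp_add]; ring_nf
      rw [this]; ring
    simp_rw [this]
    rw [intervalIntegral.integral_const_mul]
    rw [← hI]; ring
  simp_rw [hstep1]
  rw [MeasureTheory.integral_mul_const]
  -- Step 2: ∫ b in Ioi 0, exp(-γ b) = 1/γ
  have hexp : (∫ b in Set.Ioi (0:ℝ), Real.exp (-γ * b)) = 1 / γ := by
    have := MeasureTheory.integral_comp_mul_left_Ioi (fun x => Real.exp (-x)) 0 hγ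
    simp only [mul_zero, integral_exp_neg_Ioi, neg_zero, Real.exp_zero,
      smul_eq_mul, mul_one] at this
    calc (∫ b in Set.Ioi (0:ℝ), Real.exp (-γ * b))
        = ∫ b in Set.Ioi (0:ℝ), Real.exp (-(γ * b)) := by simp_rw [neg_mul]
      _ = γ⁻¹ := this
      _ = 1 / γ := (one_div γ).symm
  rw [hexp]
  -- Step 3: Fubini on the triangle
  rw [hI, key_fubini γ hγ φ hφint a ha]
  -- Step 4: arithmetic
  unfold conv
  have hconst : (∫ τ in (0:ℝ)..a, ((1 - Real.exp (-γ * (a - τ))) / γ) * φ τ)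
      = (1/γ) * ∫ τ in (0:ℝ)..a, (1 - Real.exp (-γ * (a - τ))) * φ τ := by
    rw [← intervalIntegral.integral_const_mul]
    apply intervalIntegral.integral_congr
    intro τ _
    ring
  rw [hconst]
  ring
end

section
/- Let γ > 0, β > 0, T, T_i ≥ 0, κ̂(a) = e^{-γa}, and define κ̃(a) = κ̂(max(a-T_i,0)). Then β·∫₀^∞ β·𝟙_{a>T_i}·κ̃(a)·𝟙_{a>2T_i+T}·[(a-2T_i-T) - (1-κ̂(a-T-2T_i))/γ] da = (1/2)·R₀²·κ̂(T+T_i), where R₀ = β/γ. -/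
open MeasureTheory

lemma aux_tendsto_mul_exp (b : ℝ) (hb : 0 < b) :
    Filter.Tendsto (fun x : ℝ => x * Real.exp (-b * x)) Filter.atTop (nhds 0) := by
  have h := tendsto_rpow_mul_exp_neg_mul_atTop_nhds_zero 1 b hb
  refine h.congr' ?_
  filter_upwards [Filter.eventually_gt_atTop (0:ℝ)] with x hx
  rw [Real.rpow_one]

lemma aux_integral (γ β T Ti : ℝ) (hγ : 0 < γ) (hβ : 0 < β) (hT : 0 ≤ T)
    (hTi : 0 ≤ Ti) :
    ∫ a in Set.Ioi (2 * Ti + T),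
        β * Real.exp (-γ * (a - Ti)) *
          ((a - 2 * Ti - T) - (1 - Real.exp (-γ * (a - T - 2 * Ti))) / γ)
      = β * Real.exp (-γ * (T + Ti)) / (2 * γ ^ 2) := by
  set t := 2 * Ti + T with ht
  set c := T + Ti with hc
  set g : ℝ → ℝ := fun x => β * Real.exp (-γ * c) *
      (-((x - t) / γ) * Real.exp (-γ * (x - t)) -
        Real.exp (-2 * γ * (x - t)) / (2 * γ ^ 2)) with hg
  have hderiv : ∀ x ∈ Set.Ici t, HasDerivAt g
      (β * Real.exp (-γ * (x - Ti)) *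
        ((x - 2 * Ti - T) - (1 - Real.exp (-γ * (x - T - 2 * Ti))) / γ)) x := by
    intro x _
    have h1 : HasDerivAt (fun x : ℝ => x - t) 1 x := (hasDerivAt_id x).sub_const t
    have he1 : HasDerivAt (fun x : ℝ => Real.exp (-γ * (x - t)))
        (Real.exp (-γ * (x - t)) * (-γ)) x := by
      have := (h1.const_mul (-γ)).exp
      simpa [mul_comm] using this
    have he2 : HasDerivAt (fun x : ℝ => Real.exp (-2 * γ * (x - t)))
        (Real.exp (-2 * γ * (x - t)) * (-2 * γ)) x := by
      have := (h1.const_mul (-2 * γ)).exp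
      simpa [mul_comm] using this
    have hA : HasDerivAt (fun x : ℝ => -((x - t) / γ) * Real.exp (-γ * (x - t)))
        (-(1 / γ) * Real.exp (-γ * (x - t)) +
          -((x - t) / γ) * (Real.exp (-γ * (x - t)) * (-γ))) x := by
      have h2 : HasDerivAt (fun x : ℝ => -((x - t) / γ)) (-(1 / γ)) x := by
        have := (h1.div_const γ).neg
        exact this
      exact h2.mul he1
    have hB : HasDerivAt (fun x : ℝ => Real.exp (-2 * γ * (x - t)) / (2 * γ ^ 2))
        (Real.exp (-2 * γ * (x - t)) * (-2 * γ) / (2 * γ ^ 2)) x :=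
      he2.div_const _
    have htot := ((hA.sub hB).const_mul (β * Real.exp (-γ * c)))
    refine htot.congr_deriv ?_
    have hexp : Real.exp (-γ * (x - Ti)) = Real.exp (-γ * c) * Real.exp (-γ * (x - t)) := by
      rw [← Real.exp_add]; congr 1; rw [hc, ht]; ring
    have hexp2 : Real.exp (-γ * (x - T - 2 * Ti)) = Real.exp (-γ * (x - t)) := by
      congr 1; rw [ht]; ring
    have hexp3 : Real.exp (-2 * γ * (x - t)) =
        Real.exp (-γ * (x - t)) * Real.exp (-γ * (x - t)) := by
      rw [← Real.exp_add]; ring_nf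
    rw [hexp, hexp2, hexp3]
    field_simp
    ring
  have hpos : ∀ x ∈ Set.Ioi t, 0 ≤ β * Real.exp (-γ * (x - Ti)) *
      ((x - 2 * Ti - T) - (1 - Real.exp (-γ * (x - T - 2 * Ti))) / γ) := by
    intro x hx
    have hu : 0 ≤ x - t := by simp only [Set.mem_Ioi] at hx; linarith
    have key : 1 - Real.exp (-γ * (x - T - 2 * Ti)) ≤ γ * (x - t) := by
      have := Real.add_one_le_exp (-γ * (x - T - 2 * Ti))
      have h' : -γ * (x - T - 2 * Ti) = -(γ * (x - t)) := by ring
      nlinarith [this]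
    have h3 : 0 ≤ (x - 2 * Ti - T) - (1 - Real.exp (-γ * (x - T - 2 * Ti))) / γ := by
      rw [sub_nonneg, div_le_iff₀ hγ]
      have : x - 2 * Ti - T = x - t := by ring
      rw [this]; linarith [key]
    positivity
  have htend : Filter.Tendsto g Filter.atTop (nhds 0) := by
    have h1 : Filter.Tendsto (fun x : ℝ => -((x - t) / γ) * Real.exp (-γ * (x - t)))
        Filter.atTop (nhds 0) := by
      have h0 := (aux_tendsto_mul_exp γ hγ).comp (Filter.tendsto_atTop_add_const_right
        Filter.atTop (-t) Filter.tendsto_id)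
      have h0' := (h0.div_const γ).neg
      simp only [neg_zero, zero_div] at h0'
      refine h0'.congr fun x => by simp [Function.comp]; ring_nf
    have h2 : Filter.Tendsto (fun x : ℝ => Real.exp (-2 * γ * (x - t)) / (2 * γ ^ 2))
        Filter.atTop (nhds 0) := by
      have h0 := (aux_tendsto_mul_exp (2 * γ) (by linarith)).comp
        (Filter.tendsto_atTop_add_const_right Filter.atTop (-t) Filter.tendsto_id)
      have hlin : Filter.Tendsto (fun x : ℝ => x - t) Filter.atTop Filter.atTop := by
        simpa [sub_eq_add_neg] using
          Filter.tendsto_atTop_add_const_right Filter.atTop (-t) (Filter.tendsto_id (α := ℝ))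
      have hlin2 : Filter.Tendsto (fun x : ℝ => (2 * γ) * (x - t)) Filter.atTop Filter.atTop :=
        hlin.const_mul_atTop (by linarith)
      have hb : Filter.Tendsto (fun x : ℝ => Real.exp (-2 * γ * (x - t)))
          Filter.atTop (nhds 0) := by
        have := Real.tendsto_exp_atBot.comp (Filter.tendsto_neg_atTop_atBot.comp hlin2)
        refine this.congr fun x => by simp [Function.comp]
      have := hb.div_const (2 * γ ^ 2)
      simpa only [zero_div] using this
    have := ((h1.sub h2).const_mul (β * Real.exp (-γ * c)))
    simpa only [sub_zero, sub_self, mul_zero] using this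
  have := integral_Ioi_of_hasDerivAt_of_nonneg' hderiv hpos htend
  rw [this]
  simp only [hg, sub_self, mul_zero, neg_zero, zero_mul, zero_div, Real.exp_zero]
  ring

/-- First-order backward-tracing reduction with latency T_i and delay T:
β·∫₀^∞ β·𝟙_{a>T_i}·κ̃(a)·𝟙_{a>2T_i+T}·[(a-2T_i-T) - (1-κ̂(a-T-2T_i))/γ] da
= (1/2)·R₀²·κ̂(T+T_i), where κ̂(a)=e^{-γa}, κ̃(a)=κ̂(max(a-T_i,0)), R₀=β/γ. -/
theorem stmt14 (γ β T Ti : ℝ) (hγ : 0 < γ) (hβ : 0 < β) (hT : 0 ≤ T)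
    (hTi : 0 ≤ Ti) (R₀ : ℝ) (hR : R₀ = β / γ) :
    β * ∫ a in Set.Ioi (0:ℝ),
        β * (if Ti < a then 1 else 0) * Real.exp (-γ * max (a - Ti) 0) *
          (if 2 * Ti + T < a then 1 else 0) *
          ((a - 2 * Ti - T) - (1 - Real.exp (-γ * (a - T - 2 * Ti))) / γ)
      = (1 / 2) * R₀ ^ 2 * Real.exp (-γ * (T + Ti)) := by
  set t := 2 * Ti + T with ht
  set f : ℝ → ℝ := fun a => β * Real.exp (-γ * (a - Ti)) *
      ((a - 2 * Ti - T) - (1 - Real.exp (-γ * (a - T - 2 * Ti))) / γ) with hf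
  have hcongr : ∀ a : ℝ,
      β * (if Ti < a then 1 else 0) * Real.exp (-γ * max (a - Ti) 0) *
          (if t < a then 1 else 0) *
          ((a - 2 * Ti - T) - (1 - Real.exp (-γ * (a - T - 2 * Ti))) / γ)
        = Set.indicator (Set.Ioi t) f a := by
    intro a
    by_cases h : t < a
    · have hTia : Ti < a := by simp only [ht] at h; linarith
      have hmax : max (a - Ti) 0 = a - Ti := max_eq_left (by linarith)
      rw [Set.indicator_of_mem (Set.mem_Ioi.mpr h) f]
      simp [hf, hTia, h, hmax]
    · rw [Set.indicator_of_notMem (by simpa using h) f]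
      simp [h]
  rw [show (∫ a in Set.Ioi (0:ℝ),
        β * (if Ti < a then 1 else 0) * Real.exp (-γ * max (a - Ti) 0) *
          (if t < a then 1 else 0) *
          ((a - 2 * Ti - T) - (1 - Real.exp (-γ * (a - T - 2 * Ti))) / γ))
      = ∫ a in Set.Ioi (0:ℝ), Set.indicator (Set.Ioi t) f a from
    integral_congr_ae (Filter.Eventually.of_forall fun a => hcongr a),
    setIntegral_indicator measurableSet_Ioi]
  have hset : Set.Ioi (0:ℝ) ∩ Set.Ioi t = Set.Ioi t := by
    rw [Set.Ioi_inter_Ioi]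
    exact congrArg Set.Ioi (max_eq_right (show (0:ℝ) ≤ t by rw [ht]; positivity))
  rw [hset, aux_integral γ β T Ti hγ hβ hT hTi, hR]
  field_simp
end
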